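/- For every $\alpha \in [0,1)$ there exists a constant $C = C(\alpha) > 0$ such that for every $a : \mathbb{Z}^3 \to \mathbb{C}^3$ with $a(0) = 0$, $\sum_{j=1}^3 n_j a_j(n) = 0$ for all $n \in \mathbb{Z}^3$, and $N_{3/2+\alpha}(a) < \infty$, the vector sequence $F : \mathbb{Z}^3 \to \mathbb{C}^3$ defined by $F(0) = 0$ and $F_j(n) = \sum_{k=1}^3 \big( \delta_{jk} - \tfrac{n_j n_k}{|n|^2} \big) \sum_{m=1}^3 i\, n_m \, (a_m * a_k)(n)$ for $n \ne 0$, satisfies $N_{\alpha - 1/2}(F) \le C \, N_{1/2}(a) \, N_{3/2+\alpha}(a)$. -/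

import Mathlib

open scoped ENNReal NNReal BigOperators

/-!
Write `w(n) = 1 + |n|²`, so that `N_s(a)² = ∑ₙ w(n)^s ‖a(n)‖²`. The entries of the Leray symbol
are bounded by `2` and `|nₘ| ≤ w(n)^{1/2}`, so `‖F(n)‖² ≲ w(n) (h ⋆ h)(n)²` with `h = ‖a‖`, and
everything reduces to the product estimate
`∑ₙ w(n)^s (h ⋆ h)(n)² ≲ₛ (∑ w^{1/2} h²) (∑ w^{s+1} h²)` for `s = α + 1/2 ≥ 0`.

In `(h ⋆ h)(n) = ∑ₘ h(m) h(n - m)` one may keep only the terms with `w(m) ≤ w(n - m)`, at the cost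
of a factor `2`; on those `w(n) ≤ 4 w(n - m)`. Cauchy–Schwarz with the weights `w(m)^{±1/2}` and
Fubini leave the lattice sum `∑_{w(m) ≤ w(k)} w(m)^{-1/2} ≲ w(k)`. This counting estimate in `ℤ³`
follows from `w(m)^{-1/2} ≤ 2 ∏ᵢ (|mᵢ| + 1)^{-1/3}` and the telescoping bound
`∑_{u < N} (u + 1)^{-p} ≤ N^{1-p} / (1 - p)`, a consequence of Bernoulli's inequality.
-/

/-- The Sobolev-type weighted `ℓ²` norm `N_s(a) = (∑_{n ∈ ℤ³} (1+|n|²)^s ‖a(n)‖²)^{1/2}`,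
valued in `ℝ≥0∞`. -/
noncomputable def Ns {E : Type*} [NormedAddCommGroup E] (s : ℝ) (a : (Fin 3 → ℤ) → E) : ℝ≥0∞ :=
  (∑' n : Fin 3 → ℤ,
    ENNReal.ofReal ((1 + ∑ i, ((n i : ℝ)) ^ 2) ^ s * ‖a n‖ ^ 2)) ^ (1 / 2 : ℝ)

/-- Convolution of two sequences on `ℤ³`. -/
noncomputable def conv (a b : (Fin 3 → ℤ) → ℂ) (n : Fin 3 → ℤ) : ℂ :=
  ∑' m : Fin 3 → ℤ, a m * b (n - m)

local notation "ℤ³" => Fin 3 → ℤ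

theorem ENNReal.tsum_mul_sq_le {ι : Type*} [Countable ι] (f g : ι → ℝ≥0∞) :
    (∑' i, f i * g i) ^ 2 ≤ (∑' i, f i ^ 2) * ∑' i, g i ^ 2 := by
  let _ : MeasurableSpace ι := ⊤
  have holder := ENNReal.lintegral_mul_le_Lp_mul_Lq MeasureTheory.Measure.count
    Real.HolderConjugate.two_two (measurable_of_countable f).aemeasurable
    (measurable_of_countable g).aemeasurable
  simp only [MeasureTheory.lintegral_count, Pi.mul_apply, ENNReal.rpow_two] at holder
  calc (∑' i, f i * g i) ^ 2
      ≤ ((∑' i, f i ^ 2) ^ (1 / 2 : ℝ) * (∑' i, g i ^ 2) ^ (1 / 2 : ℝ)) ^ 2 := by gcongr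
    _ = _ := by
        rw [mul_pow, ← ENNReal.rpow_natCast, ← ENNReal.rpow_natCast, ← ENNReal.rpow_mul,
          ← ENNReal.rpow_mul]
        norm_num

theorem ENNReal.tsum_mul_sq_le_weighted {ι : Type*} [Countable ι] (w f g : ι → ℝ≥0∞)
    (hw0 : ∀ i, w i ≠ 0) (hwt : ∀ i, w i ≠ ⊤) :
    (∑' i, f i * g i) ^ 2 ≤ (∑' i, w i * f i ^ 2) * ∑' i, (w i)⁻¹ * g i ^ 2 := by
  set u : ι → ℝ≥0∞ := fun i => w i ^ (1 / 2 : ℝ)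
  have hu_sq : ∀ i, u i ^ 2 = w i := fun i => by
    rw [← ENNReal.rpow_natCast, ← ENNReal.rpow_mul]; norm_num
  have hu_inv : ∀ i, u i * (u i)⁻¹ = 1 := fun i =>
    ENNReal.mul_inv_cancel (by simp [u, hw0 i]) (by simp [u, hwt i])
  calc (∑' i, f i * g i) ^ 2 = (∑' i, (u i * f i) * ((u i)⁻¹ * g i)) ^ 2 := by
        congr 2 with i
        rw [mul_mul_mul_comm, hu_inv, one_mul]
    _ ≤ _ := ENNReal.tsum_mul_sq_le _ _
    _ = _ := by simp only [mul_pow, ← ENNReal.inv_pow, hu_sq]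

theorem ENNReal.tsum_pi_prod_eq_pow {α : Type*} (f : α → ℝ≥0∞) :
    ∀ d : ℕ, ∑' m : Fin d → α, ∏ i, f (m i) = (∑' x, f x) ^ d
  | 0 => by simp
  | d + 1 => by
    rw [← (Fin.consEquiv fun _ => α).tsum_eq]
    simp only [Fin.consEquiv_apply, Fin.prod_univ_succ, Fin.cons_zero, Fin.cons_succ]
    rw [ENNReal.tsum_prod']
    simp only [ENNReal.tsum_mul_left, ENNReal.tsum_mul_right, ENNReal.tsum_pi_prod_eq_pow f d,
      pow_succ']

theorem ENNReal.tsum_int_natAbs_le (f : ℕ → ℝ≥0∞) :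
    ∑' t : ℤ, f t.natAbs ≤ 2 * ∑' u, f u := by
  rw [tsum_of_nat_of_neg_add_one ENNReal.summable ENNReal.summable, two_mul]
  refine add_le_add (by simp) ?_
  have hneg : ∀ u : ℕ, (-((u : ℤ) + 1)).natAbs = u + 1 := fun u => by omega
  simp only [hneg]
  exact ENNReal.tsum_comp_le_tsum_of_injective (add_left_injective 1) f

theorem ENNReal.le_ofReal_sqrt_mul_mul {x y z : ℝ≥0∞} {k : ℝ} (hk : 0 ≤ k)
    (h : x ^ 2 ≤ ENNReal.ofReal k * y ^ 2 * z ^ 2) : x ≤ ENNReal.ofReal √k * y * z := by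
  rwa [← ENNReal.pow_le_pow_left_iff two_ne_zero, mul_pow, mul_pow,
    ← ENNReal.ofReal_pow (Real.sqrt_nonneg _), Real.sq_sqrt hk]

theorem Real.add_one_rpow_neg_le_sub {p : ℝ} (hp0 : 0 ≤ p) (hp1 : p < 1) {x : ℝ} (hx : 0 ≤ x) :
    (x + 1) ^ (-p) ≤ ((x + 1) ^ (1 - p) - x ^ (1 - p)) / (1 - p) := by
  have hx1 : 0 < x + 1 := by linarith
  have bernoulli := rpow_one_add_le_one_add_mul_self (s := -1 / (x + 1))
    (by rw [neg_div, neg_le_neg_iff, div_le_one hx1]; linarith) (by linarith : 0 ≤ 1 - p)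
    (by linarith : 1 - p ≤ 1)
  rw [show 1 + -1 / (x + 1) = x / (x + 1) by field_simp; ring, Real.div_rpow hx hx1.le,
    div_le_iff₀ (by positivity)] at bernoulli
  have hsplit : (1 + (1 - p) * (-1 / (x + 1))) * (x + 1) ^ (1 - p)
      = (x + 1) ^ (1 - p) - (1 - p) * (x + 1) ^ (-p) := by
    rw [sub_eq_add_neg 1 p, Real.rpow_add hx1, Real.rpow_one]
    field_simp
    ring
  rw [le_div_iff₀ (by linarith)]
  linarith

theorem Real.sum_range_add_one_rpow_neg_le {p : ℝ} (hp0 : 0 ≤ p) (hp1 : p < 1) (N : ℕ) :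
    ∑ u ∈ Finset.range N, ((u : ℝ) + 1) ^ (-p) ≤ (N : ℝ) ^ (1 - p) / (1 - p) := by
  calc ∑ u ∈ Finset.range N, ((u : ℝ) + 1) ^ (-p)
      ≤ ∑ u ∈ Finset.range N, (((u + 1 : ℕ) : ℝ) ^ (1 - p) - (u : ℝ) ^ (1 - p)) / (1 - p) :=
        Finset.sum_le_sum fun u _ => by
          push_cast; exact Real.add_one_rpow_neg_le_sub hp0 hp1 u.cast_nonneg
    _ = (N : ℝ) ^ (1 - p) / (1 - p) := by
        rw [← Finset.sum_div, Finset.sum_range_sub (fun u : ℕ => (u : ℝ) ^ (1 - p)),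
          Nat.cast_zero, Real.zero_rpow (by linarith), sub_zero]

theorem ENNReal.tsum_ite_add_one_rpow_neg_le {p : ℝ} (hp0 : 0 ≤ p) (hp1 : p < 1) {X : ℝ}
    (hX : 0 ≤ X) :
    ∑' u : ℕ, (if (u : ℝ) + 1 ≤ X then ENNReal.ofReal (((u : ℝ) + 1) ^ (-p)) else 0)
      ≤ ENNReal.ofReal (X ^ (1 - p) / (1 - p)) := by
  have hrange : ∀ u : ℕ, (u : ℝ) + 1 ≤ X ↔ u ∈ Finset.range ⌊X⌋₊ := fun u => by
    rw [Finset.mem_range, ← Nat.add_one_le_iff, Nat.le_floor_iff hX]; push_cast; rfl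
  simp only [hrange]
  rw [tsum_eq_sum (s := Finset.range ⌊X⌋₊) (fun u hu => if_neg hu), Finset.sum_ite_mem,
    Finset.inter_self, ← ENNReal.ofReal_sum_of_nonneg (fun _ _ => by positivity)]
  refine ENNReal.ofReal_le_ofReal ((Real.sum_range_add_one_rpow_neg_le hp0 hp1 _).trans ?_)
  gcongr
  exact Nat.floor_le hX

section Convolution

variable {G : Type*} [AddCommGroup G]

noncomputable def ennrealConv (f g : G → ℝ≥0∞) (n : G) : ℝ≥0∞ :=
  ∑' m, f m * g (n - m)

noncomputable def halfConv {β : Type*} [LinearOrder β] (ρ : G → β) (h : G → ℝ≥0∞) (n : G) :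
    ℝ≥0∞ :=
  ∑' m, if ρ m ≤ ρ (n - m) then h m * h (n - m) else 0

theorem ennrealConv_self_le_two_mul_halfConv {β : Type*} [LinearOrder β] (ρ : G → β)
    (h : G → ℝ≥0∞) (n : G) :
    ennrealConv h h n ≤ 2 * halfConv ρ h n := by
  have hsymm : halfConv ρ h n = ∑' m, if ρ (n - m) ≤ ρ m then h (n - m) * h m else 0 := by
    rw [← (Equiv.subLeft n).tsum_eq]
    simp only [Equiv.subLeft_apply, sub_sub_cancel]
    rfl
  calc ennrealConv h h n
      ≤ ∑' m, ((if ρ m ≤ ρ (n - m) then h m * h (n - m) else 0) +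
          if ρ (n - m) ≤ ρ m then h (n - m) * h m else 0) :=
        ENNReal.tsum_le_tsum fun m => by
          rcases le_total (ρ m) (ρ (n - m)) with hle | hle
          · simp [hle]
          · simp [hle, mul_comm]
    _ = 2 * halfConv ρ h n := by rw [ENNReal.tsum_add, ← hsymm, two_mul]; rfl

theorem tsum_tsum_ite_mul_sub {β : Type*} [LinearOrder β] (ρ : G → β) (f g : G → ℝ≥0∞) :
    ∑' n, ∑' m, (if ρ m ≤ ρ (n - m) then f m * g (n - m) else 0)
      = ∑' k, g k * ∑' m, if ρ m ≤ ρ k then f m else 0 := by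
  rw [ENNReal.tsum_comm]
  have hshift : ∀ m, ∑' n, (if ρ m ≤ ρ (n - m) then f m * g (n - m) else 0)
      = ∑' k, if ρ m ≤ ρ k then f m * g k else 0 := fun m => by
    rw [← (Equiv.addRight m).tsum_eq]
    simp only [Equiv.coe_addRight, add_sub_cancel_right]
  simp only [hshift]
  rw [ENNReal.tsum_comm]
  congr 1 with k
  rw [← ENNReal.tsum_mul_left]
  congr 1 with m
  split_ifs <;> simp [mul_comm]

end Convolution

noncomputable def oneAddNormSq {d : ℕ} (n : Fin d → ℤ) : ℝ := 1 + ∑ i, (n i : ℝ) ^ 2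

section Weight

variable {d : ℕ}

theorem one_add_sq_le_oneAddNormSq (n : Fin d → ℤ) (i : Fin d) :
    1 + (n i : ℝ) ^ 2 ≤ oneAddNormSq n := by
  unfold oneAddNormSq
  gcongr
  exact Finset.single_le_sum (f := fun i => (n i : ℝ) ^ 2) (fun _ _ => sq_nonneg _)
    (Finset.mem_univ i)

theorem oneAddNormSq_pos (n : Fin d → ℤ) : 0 < oneAddNormSq n :=
  add_pos_of_pos_of_nonneg one_pos (Finset.sum_nonneg fun _ _ => sq_nonneg _)

theorem abs_le_sqrt_oneAddNormSq (n : Fin d → ℤ) (i : Fin d) :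
    |(n i : ℝ)| ≤ √(oneAddNormSq n) :=
  Real.abs_le_sqrt (by linarith [one_add_sq_le_oneAddNormSq n i])

theorem natAbs_add_one_sq_le (n : Fin d → ℤ) (i : Fin d) :
    (((n i).natAbs : ℝ) + 1) ^ 2 ≤ 2 * oneAddNormSq n := by
  have := one_add_sq_le_oneAddNormSq n i
  rw [Nat.cast_natAbs, Int.cast_abs]
  nlinarith [sq_abs (n i : ℝ), sq_nonneg (|(n i : ℝ)| - 1)]

theorem oneAddNormSq_add_le (m k : Fin d → ℤ) :
    oneAddNormSq (m + k) ≤ 2 * (oneAddNormSq m + oneAddNormSq k) := by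
  unfold oneAddNormSq
  have hcoord : ∀ i, ((m + k) i : ℝ) ^ 2 ≤ 2 * (m i : ℝ) ^ 2 + 2 * (k i : ℝ) ^ 2 := fun i => by
    push_cast [Pi.add_apply]
    nlinarith [sq_nonneg ((m i : ℝ) - k i)]
  have := Finset.sum_le_sum fun i (_ : i ∈ Finset.univ) => hcoord i
  rw [Finset.sum_add_distrib, ← Finset.mul_sum, ← Finset.mul_sum] at this
  linarith

theorem oneAddNormSq_add_rpow_le {m k : Fin d → ℤ} (hmk : oneAddNormSq m ≤ oneAddNormSq k)
    {s : ℝ} (hs : 0 ≤ s) :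
    oneAddNormSq (m + k) ^ s ≤ 4 ^ s * oneAddNormSq k ^ s := by
  rw [← Real.mul_rpow (by norm_num) (oneAddNormSq_pos k).le]
  exact Real.rpow_le_rpow (oneAddNormSq_pos _).le
    ((oneAddNormSq_add_le m k).trans (by linarith)) hs

theorem ofReal_oneAddNormSq_rpow_mul (n : Fin d → ℤ) (s t : ℝ) :
    ENNReal.ofReal (oneAddNormSq n ^ s) * ENNReal.ofReal (oneAddNormSq n ^ t)
      = ENNReal.ofReal (oneAddNormSq n ^ (s + t)) := by
  rw [← ENNReal.ofReal_mul (Real.rpow_nonneg (oneAddNormSq_pos n).le _),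
    Real.rpow_add (oneAddNormSq_pos n)]

noncomputable def weightedSqSum (s : ℝ) (h : (Fin d → ℤ) → ℝ≥0∞) : ℝ≥0∞ :=
  ∑' n, ENNReal.ofReal (oneAddNormSq n ^ s) * h n ^ 2

theorem weightedSqSum_le_of_sq_le {f g : (Fin d → ℤ) → ℝ≥0∞} {c : ℝ≥0∞}
    (hfg : ∀ n, f n ^ 2 ≤ c * ENNReal.ofReal (oneAddNormSq n) * g n ^ 2) (s : ℝ) :
    weightedSqSum s f ≤ c * weightedSqSum (s + 1) g := by
  unfold weightedSqSum
  rw [← ENNReal.tsum_mul_left]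
  refine ENNReal.tsum_le_tsum fun n => ?_
  grw [hfg n, ← ofReal_oneAddNormSq_rpow_mul n s 1, Real.rpow_one]
  exact le_of_eq (by ring)

end Weight

theorem oneAddNormSq_rpow_neg_half_le (m : ℤ³) :
    oneAddNormSq m ^ (-(1 / 2) : ℝ) ≤ 2 * ∏ i, (((m i).natAbs : ℝ) + 1) ^ (-(1 / 3) : ℝ) := by
  set w := oneAddNormSq m
  have hw : 0 < w := oneAddNormSq_pos m
  set P := ∏ i, (((m i).natAbs : ℝ) + 1)
  have hP : 0 < P := Finset.prod_pos fun _ _ => by positivity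
  have hP2 : P ^ 2 ≤ (2 * w) ^ 3 := by
    rw [← Finset.prod_pow]
    calc ∏ i, (((m i).natAbs : ℝ) + 1) ^ 2 ≤ ∏ _i : Fin 3, 2 * w :=
          Finset.prod_le_prod (fun _ _ => by positivity) fun i _ => natAbs_add_one_sq_le m i
      _ = (2 * w) ^ 3 := by simp
  have hroot : (2 * w) ^ (-(1 / 2) : ℝ) ≤ P ^ (-(1 / 3) : ℝ) := by
    have h := Real.rpow_le_rpow_of_nonpos (by positivity) hP2 (by norm_num : (-(1 / 6) : ℝ) ≤ 0)
    rw [← Real.rpow_natCast, ← Real.rpow_natCast, ← Real.rpow_mul (by positivity),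
      ← Real.rpow_mul hP.le] at h
    norm_num at h
    exact h
  rw [Real.finsetProd_rpow _ _ fun _ _ => by positivity]
  rw [Real.mul_rpow (by norm_num) hw.le] at hroot
  have htwo : (2 : ℝ) ^ (-1 : ℝ) ≤ 2 ^ (-(1 / 2) : ℝ) :=
    Real.rpow_le_rpow_of_exponent_le (by norm_num) (by norm_num)
  rw [Real.rpow_neg_one] at htwo
  nlinarith [Real.rpow_nonneg hw.le (-(1 / 2) : ℝ)]

theorem tsum_ite_oneAddNormSq_rpow_neg_half_le {R : ℝ} (hR : 0 ≤ R) :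
    ∑' m : ℤ³, (if oneAddNormSq m ≤ R then
        ENNReal.ofReal (oneAddNormSq m ^ (-(1 / 2) : ℝ)) else 0)
      ≤ ENNReal.ofReal (108 * R) := by
  set X := √(2 * R)
  set g : ℕ → ℝ≥0∞ := fun u =>
    if (u : ℝ) + 1 ≤ X then ENNReal.ofReal (((u : ℝ) + 1) ^ (-(1 / 3) : ℝ)) else 0
  have hterm : ∀ m : ℤ³, (if oneAddNormSq m ≤ R then
      ENNReal.ofReal (oneAddNormSq m ^ (-(1 / 2) : ℝ)) else 0) ≤ 2 * ∏ i, g (m i).natAbs := by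
    intro m
    split_ifs with hmR
    · have hcoord : ∀ i, ((m i).natAbs : ℝ) + 1 ≤ X := fun i =>
        Real.le_sqrt_of_sq_le ((natAbs_add_one_sq_le m i).trans (by linarith))
      simp only [g, hcoord, if_true]
      rw [← ENNReal.ofReal_prod_of_nonneg fun _ _ => by positivity, ← ENNReal.ofReal_ofNat 2,
        ← ENNReal.ofReal_mul (by norm_num)]
      exact ENNReal.ofReal_le_ofReal (oneAddNormSq_rpow_neg_half_le m)
    · exact zero_le
  have hcube : (X ^ (1 - 1 / 3 : ℝ)) ^ 3 = 2 * R := by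
    rw [← Real.rpow_natCast, ← Real.rpow_mul (Real.sqrt_nonneg _),
      show (1 - 1 / 3 : ℝ) * (3 : ℕ) = 2 by norm_num, Real.rpow_two, Real.sq_sqrt (by linarith)]
  calc _ ≤ ∑' m : ℤ³, 2 * ∏ i, g (m i).natAbs := ENNReal.tsum_le_tsum hterm
    _ = 2 * (∑' t : ℤ, g t.natAbs) ^ 3 := by
        rw [ENNReal.tsum_mul_left, ENNReal.tsum_pi_prod_eq_pow (fun t : ℤ => g t.natAbs)]
    _ ≤ 2 * (2 * ENNReal.ofReal (X ^ (1 - 1 / 3 : ℝ) / (1 - 1 / 3))) ^ 3 := by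
        have h1D := ENNReal.tsum_ite_add_one_rpow_neg_le (p := 1 / 3) (by norm_num) (by norm_num)
          (Real.sqrt_nonneg (2 * R))
        gcongr
        exact (ENNReal.tsum_int_natAbs_le g).trans (mul_le_mul_right h1D 2)
    _ = ENNReal.ofReal (108 * R) := by
        rw [← ENNReal.ofReal_ofNat 2, ← ENNReal.ofReal_mul (by norm_num),
          ← ENNReal.ofReal_pow (by positivity), ← ENNReal.ofReal_mul (by norm_num)]
        congr 1
        rw [mul_pow, div_pow, hcube]
        ring

theorem ofReal_rpow_mul_halfConv_sq_le {s : ℝ} (hs : 0 ≤ s) (h : ℤ³ → ℝ≥0∞) (n : ℤ³) :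
    ENNReal.ofReal (oneAddNormSq n ^ s) * halfConv oneAddNormSq h n ^ 2
      ≤ ENNReal.ofReal (4 ^ s) * weightedSqSum (1 / 2) h *
        ∑' m, if oneAddNormSq m ≤ oneAddNormSq (n - m) then
          ENNReal.ofReal (oneAddNormSq m ^ (-(1 / 2) : ℝ)) *
            (ENNReal.ofReal (oneAddNormSq (n - m) ^ s) * h (n - m) ^ 2) else 0 := by
  set w : ℤ³ → ℝ≥0∞ := fun m => ENNReal.ofReal (oneAddNormSq m ^ (1 / 2 : ℝ))
  have hw0 : ∀ m, w m ≠ 0 := fun m => by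
    simpa [w] using Real.rpow_pos_of_pos (oneAddNormSq_pos m) _
  have hw_inv : ∀ m, (w m)⁻¹ = ENNReal.ofReal (oneAddNormSq m ^ (-(1 / 2) : ℝ)) := fun m => by
    rw [Real.rpow_neg (oneAddNormSq_pos m).le,
      ENNReal.ofReal_inv_of_pos (Real.rpow_pos_of_pos (oneAddNormSq_pos m) _)]
  set g : ℤ³ → ℝ≥0∞ := fun m =>
    if oneAddNormSq m ≤ oneAddNormSq (n - m) then h (n - m) else 0
  have hPg : halfConv oneAddNormSq h n = ∑' m, h m * g m := by
    unfold halfConv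
    congr 1 with m
    simp only [g]; split_ifs <;> simp
  have hterm : ∀ m, ENNReal.ofReal (oneAddNormSq n ^ s) * ((w m)⁻¹ * g m ^ 2)
      ≤ ENNReal.ofReal (4 ^ s) * if oneAddNormSq m ≤ oneAddNormSq (n - m) then
          ENNReal.ofReal (oneAddNormSq m ^ (-(1 / 2) : ℝ)) *
            (ENNReal.ofReal (oneAddNormSq (n - m) ^ s) * h (n - m) ^ 2) else 0 := fun m => by
    simp only [g]
    split_ifs with hmn
    · have hpeetre := oneAddNormSq_add_rpow_le hmn hs
      rw [add_sub_cancel] at hpeetre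
      calc _ ≤ ENNReal.ofReal (4 ^ s * oneAddNormSq (n - m) ^ s) *
              ((w m)⁻¹ * h (n - m) ^ 2) := by gcongr
        _ = _ := by rw [hw_inv, ENNReal.ofReal_mul (by positivity)]; ring
    · simp
  calc _ = ENNReal.ofReal (oneAddNormSq n ^ s) * (∑' m, h m * g m) ^ 2 := by rw [hPg]
    _ ≤ ENNReal.ofReal (oneAddNormSq n ^ s) *
          (weightedSqSum (1 / 2) h * ∑' m, (w m)⁻¹ * g m ^ 2) :=
        mul_le_mul_right (ENNReal.tsum_mul_sq_le_weighted w h g hw0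
          fun _ => ENNReal.ofReal_ne_top) _
    _ = weightedSqSum (1 / 2) h *
          ∑' m, ENNReal.ofReal (oneAddNormSq n ^ s) * ((w m)⁻¹ * g m ^ 2) := by
        rw [ENNReal.tsum_mul_left]; ring
    _ ≤ _ := by
        grw [ENNReal.tsum_le_tsum hterm, ENNReal.tsum_mul_left]
        exact le_of_eq (by ring)

theorem weightedSqSum_ennrealConv_le {s : ℝ} (hs : 0 ≤ s) (h : ℤ³ → ℝ≥0∞) :
    weightedSqSum s (ennrealConv h h)
      ≤ ENNReal.ofReal (432 * 4 ^ s) * weightedSqSum (1 / 2) h * weightedSqSum (s + 1) h := by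
  set A := weightedSqSum (1 / 2) h
  have hlattice : ∑' k : ℤ³, ENNReal.ofReal (oneAddNormSq k ^ s) * h k ^ 2 *
      ∑' m : ℤ³, (if oneAddNormSq m ≤ oneAddNormSq k then
        ENNReal.ofReal (oneAddNormSq m ^ (-(1 / 2) : ℝ)) else 0)
      ≤ 108 * weightedSqSum (s + 1) h := by
    rw [weightedSqSum, ← ENNReal.tsum_mul_left]
    refine ENNReal.tsum_le_tsum fun k => ?_
    grw [tsum_ite_oneAddNormSq_rpow_neg_half_le (oneAddNormSq_pos k).le,
      ENNReal.ofReal_mul (by norm_num), ← ofReal_oneAddNormSq_rpow_mul k s 1, Real.rpow_one,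
      ENNReal.ofReal_ofNat]
    exact le_of_eq (by ring)
  have hswap := tsum_tsum_ite_mul_sub oneAddNormSq
    (fun m => ENNReal.ofReal (oneAddNormSq m ^ (-(1 / 2) : ℝ)))
    (fun k => ENNReal.ofReal (oneAddNormSq k ^ s) * h k ^ 2)
  beta_reduce at hswap
  calc weightedSqSum s (ennrealConv h h)
      ≤ ∑' n, ENNReal.ofReal (oneAddNormSq n ^ s) * (2 * halfConv oneAddNormSq h n) ^ 2 := by
        unfold weightedSqSum
        gcongr with n
        exact ennrealConv_self_le_two_mul_halfConv oneAddNormSq h n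
    _ ≤ ∑' n, 4 * (ENNReal.ofReal (4 ^ s) * A * ∑' m,
          if oneAddNormSq m ≤ oneAddNormSq (n - m) then
            ENNReal.ofReal (oneAddNormSq m ^ (-(1 / 2) : ℝ)) *
              (ENNReal.ofReal (oneAddNormSq (n - m) ^ s) * h (n - m) ^ 2) else 0) := by
        refine ENNReal.tsum_le_tsum fun n => ?_
        grw [mul_pow, ← ofReal_rpow_mul_halfConv_sq_le hs h n]
        exact le_of_eq (by ring)
    _ = 4 * ENNReal.ofReal (4 ^ s) * A * ∑' k : ℤ³,
          ENNReal.ofReal (oneAddNormSq k ^ s) * h k ^ 2 * ∑' m : ℤ³,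
            (if oneAddNormSq m ≤ oneAddNormSq k then
              ENNReal.ofReal (oneAddNormSq m ^ (-(1 / 2) : ℝ)) else 0) := by
        rw [ENNReal.tsum_mul_left, ENNReal.tsum_mul_left, hswap]
        ring
    _ ≤ 4 * ENNReal.ofReal (4 ^ s) * A * (108 * weightedSqSum (s + 1) h) := by gcongr
    _ = _ := by
        rw [ENNReal.ofReal_mul (by norm_num), ENNReal.ofReal_ofNat]
        ring

theorem Ns_sq {E : Type*} [NormedAddCommGroup E] (s : ℝ) (a : ℤ³ → E) :
    Ns s a ^ 2 = weightedSqSum s fun n => ‖a n‖ₑ := by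
  rw [Ns, ← ENNReal.rpow_natCast, ← ENNReal.rpow_mul, show (1 / 2 : ℝ) * (2 : ℕ) = 1 by norm_num,
    ENNReal.rpow_one]
  congr 1 with n
  rw [ENNReal.ofReal_mul (by positivity), ENNReal.ofReal_pow (norm_nonneg _), ofReal_norm]
  rfl

theorem enorm_conv_le (f g : ℤ³ → ℂ) (n : ℤ³) :
    ‖conv f g n‖ₑ ≤ ennrealConv (fun m => ‖f m‖ₑ) (fun m => ‖g m‖ₑ) n :=
  enorm_tsum_le_tsum_enorm.trans_eq (by simp only [enorm_mul]; rfl)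

theorem EuclideanSpace.enorm_sq_eq {𝕜 ι : Type*} [RCLike 𝕜] [Fintype ι]
    (x : EuclideanSpace 𝕜 ι) :
    ‖x‖ₑ ^ 2 = ∑ i, ‖x i‖ₑ ^ 2 := by
  simp only [← ofReal_norm, ← ENNReal.ofReal_pow (norm_nonneg _), EuclideanSpace.norm_sq_eq,
    ENNReal.ofReal_sum_of_nonneg fun _ _ => sq_nonneg _]

theorem norm_leraySymbol_le {d : ℕ} {n : Fin d → ℤ} (hn : n ≠ 0) (j k : Fin d) :
    ‖((if j = k then 1 else 0) : ℂ) - (n j : ℂ) * (n k : ℂ) / ((∑ i, (n i) ^ 2 : ℤ) : ℂ)‖ ≤ 2 := by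
  set q : ℤ := ∑ i, n i ^ 2
  have hsq : ∀ i, n i ^ 2 ≤ q := fun i =>
    Finset.single_le_sum (f := fun i => n i ^ 2) (fun _ _ => sq_nonneg _) (Finset.mem_univ i)
  have hq : 0 < q := by
    obtain ⟨i, hi⟩ := Function.ne_iff.mp hn
    exact (pow_pos (abs_pos.mpr hi) 2 |>.trans_eq (sq_abs _)).trans_le (hsq i)
  have hprod : |n j * n k| ≤ q := by
    rw [abs_mul]
    nlinarith [sq_abs (n j), sq_abs (n k), two_mul_le_add_sq |n j| |n k|, hsq j, hsq k]
  have hratio : ‖(n j : ℂ) * (n k : ℂ) / (q : ℂ)‖ ≤ 1 := by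
    rw [← Int.cast_mul, norm_div, Complex.norm_intCast, Complex.norm_intCast,
      div_le_one (by positivity)]
    exact_mod_cast hprod.trans (le_abs_self q)
  calc _ ≤ ‖((if j = k then 1 else 0) : ℂ)‖ + 1 := (norm_sub_le _ _).trans (by gcongr)
    _ ≤ 2 := by split_ifs <;> norm_num

noncomputable def lerayNonlinearity (a : ℤ³ → EuclideanSpace ℂ (Fin 3)) (n : ℤ³) (j : Fin 3) :
    ℂ :=
  ∑ k, (((if j = k then 1 else 0) : ℂ) - (n j : ℂ) * (n k : ℂ) / ((∑ i, (n i) ^ 2 : ℤ) : ℂ)) *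
    ∑ m, Complex.I * (n m : ℂ) * conv (fun p => a p m) (fun p => a p k) n

theorem enorm_lerayNonlinearity_le (a : ℤ³ → EuclideanSpace ℂ (Fin 3)) {n : ℤ³} (hn : n ≠ 0)
    (j : Fin 3) :
    ‖lerayNonlinearity a n j‖ₑ ≤ 18 * ENNReal.ofReal √(oneAddNormSq n) *
      ennrealConv (fun p => ‖a p‖ₑ) (fun p => ‖a p‖ₑ) n := by
  set C := ennrealConv (fun p => ‖a p‖ₑ) (fun p => ‖a p‖ₑ) n
  have hconv : ∀ m k, ‖conv (fun p => a p m) (fun p => a p k) n‖ₑ ≤ C := fun m k =>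
    (enorm_conv_le _ _ n).trans <| ENNReal.tsum_le_tsum fun p =>
      mul_le_mul' (PiLp.enorm_apply_le _ _) (PiLp.enorm_apply_le _ _)
  have hfreq : ∀ m, ‖Complex.I * (n m : ℂ)‖ₑ ≤ ENNReal.ofReal √(oneAddNormSq n) := fun m => by
    rw [← ofReal_norm, norm_mul, Complex.norm_I, one_mul, Complex.norm_intCast]
    exact ENNReal.ofReal_le_ofReal (abs_le_sqrt_oneAddNormSq n m)
  have hsymb : ∀ k, ‖((if j = k then 1 else 0) : ℂ) -
      (n j : ℂ) * (n k : ℂ) / ((∑ i, (n i) ^ 2 : ℤ) : ℂ)‖ₑ ≤ 2 := fun k => by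
    rw [← ofReal_norm, ← ENNReal.ofReal_ofNat]
    exact ENNReal.ofReal_le_ofReal (norm_leraySymbol_le hn j k)
  calc ‖lerayNonlinearity a n j‖ₑ
      ≤ ∑ k : Fin 3, 2 * ∑ m : Fin 3, ENNReal.ofReal √(oneAddNormSq n) * C := by
        refine (enorm_sum_le _ _).trans (Finset.sum_le_sum fun k _ => ?_)
        rw [enorm_mul]
        refine mul_le_mul' (hsymb k) ((enorm_sum_le _ _).trans (Finset.sum_le_sum fun m _ => ?_))
        rw [enorm_mul]
        exact mul_le_mul' (hfreq m) (hconv m k)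
    _ = _ := by simp only [Finset.sum_const, Finset.card_univ, Fintype.card_fin]; ring

theorem enorm_sq_le_of_eq_lerayNonlinearity {a F : ℤ³ → EuclideanSpace ℂ (Fin 3)}
    (hF0 : F 0 = 0) (hF : ∀ n, n ≠ 0 → ∀ j, F n j = lerayNonlinearity a n j) (n : ℤ³) :
    ‖F n‖ₑ ^ 2 ≤ 972 * ENNReal.ofReal (oneAddNormSq n) *
      ennrealConv (fun p => ‖a p‖ₑ) (fun p => ‖a p‖ₑ) n ^ 2 := by
  rcases eq_or_ne n 0 with rfl | hn
  · simp [hF0]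
  calc ‖F n‖ₑ ^ 2 = ∑ j, ‖lerayNonlinearity a n j‖ₑ ^ 2 := by
        simp only [EuclideanSpace.enorm_sq_eq, hF n hn]
    _ ≤ ∑ _j : Fin 3, (18 * ENNReal.ofReal √(oneAddNormSq n) *
          ennrealConv (fun p => ‖a p‖ₑ) (fun p => ‖a p‖ₑ) n) ^ 2 := by
        gcongr with j
        exact enorm_lerayNonlinearity_le a hn j
    _ = _ := by
        rw [Finset.sum_const, Finset.card_univ, Fintype.card_fin, mul_pow, mul_pow,
          ← ENNReal.ofReal_pow (Real.sqrt_nonneg _), Real.sq_sqrt (oneAddNormSq_pos n).le]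
        norm_num
        ring

theorem Ns_leray_nonlinearity_alpha_general (α : ℝ) (hα0 : 0 ≤ α) :
    ∃ C : ℝ, 0 < C ∧ ∀ a : (Fin 3 → ℤ) → EuclideanSpace ℂ (Fin 3),
      a 0 = 0 →
      (∀ n : Fin 3 → ℤ, ∑ j, (n j : ℂ) * a n j = 0) →
      Ns (3 / 2 + α) a < ⊤ →
      ∀ F : (Fin 3 → ℤ) → EuclideanSpace ℂ (Fin 3),
        F 0 = 0 →
        (∀ n : Fin 3 → ℤ, n ≠ 0 → ∀ j : Fin 3, F n j =
          ∑ k, (((if j = k then 1 else 0) : ℂ) -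
              (n j : ℂ) * (n k : ℂ) / ((∑ i, (n i) ^ 2 : ℤ) : ℂ)) *
            ∑ m, Complex.I * (n m : ℂ) *
              conv (fun p => a p m) (fun p => a p k) n) →
        Ns (α - 1 / 2) F ≤ ENNReal.ofReal C * Ns (1 / 2 : ℝ) a * Ns (3 / 2 + α) a := by
  refine ⟨√(972 * (432 * 4 ^ (α + 1 / 2))), by positivity, fun a _ _ _ F hF0 hF => ?_⟩
  refine ENNReal.le_ofReal_sqrt_mul_mul (by positivity) ?_
  have hpointwise := enorm_sq_le_of_eq_lerayNonlinearity hF0 hF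
  rw [Ns_sq, Ns_sq, Ns_sq, ENNReal.ofReal_mul (by norm_num), ENNReal.ofReal_ofNat]
  calc weightedSqSum (α - 1 / 2) (fun n => ‖F n‖ₑ)
      ≤ 972 * weightedSqSum (α + 1 / 2) (ennrealConv (fun p => ‖a p‖ₑ) (fun p => ‖a p‖ₑ)) := by
        convert weightedSqSum_le_of_sq_le hpointwise (α - 1 / 2) using 3; ring
    _ ≤ 972 * (ENNReal.ofReal (432 * 4 ^ (α + 1 / 2)) * weightedSqSum (1 / 2) (fun p => ‖a p‖ₑ) *
          weightedSqSum (α + 1 / 2 + 1) (fun p => ‖a p‖ₑ)) := by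
        gcongr
        exact weightedSqSum_ennrealConv_le (by linarith) _
    _ = _ := by rw [show α + 1 / 2 + 1 = 3 / 2 + α by ring]; ring

/-- Estimate for the Leray-projected nonlinearity:
`N_{α-1/2}(F) ≤ C N_{1/2}(a) N_{3/2+α}(a)` for divergence-free, mean-zero `a`, where `F`
consists of the Fourier coefficients of `𝒫 ∇·(u ⊗ u)`. -/
theorem Ns_leray_nonlinearity_alpha (α : ℝ) (hα0 : 0 ≤ α) (hα1 : α < 1) :
    ∃ C : ℝ, 0 < C ∧ ∀ a : (Fin 3 → ℤ) → EuclideanSpace ℂ (Fin 3),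
      a 0 = 0 →
      (∀ n : Fin 3 → ℤ, ∑ j, (n j : ℂ) * a n j = 0) →
      Ns (3 / 2 + α) a < ⊤ →
      ∀ F : (Fin 3 → ℤ) → EuclideanSpace ℂ (Fin 3),
        F 0 = 0 →
        (∀ n : Fin 3 → ℤ, n ≠ 0 → ∀ j : Fin 3, F n j =
          ∑ k, (((if j = k then 1 else 0) : ℂ) -
              (n j : ℂ) * (n k : ℂ) / ((∑ i, (n i) ^ 2 : ℤ) : ℂ)) *
            ∑ m, Complex.I * (n m : ℂ) *
              conv (fun p => a p m) (fun p => a p k) n) →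
        Ns (α - 1 / 2) F ≤ ENNReal.ofReal C * Ns (1 / 2 : ℝ) a * Ns (3 / 2 + α) a :=
  Ns_leray_nonlinearity_alpha_general α hα0
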